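/- arXiv:1610.00930 — 3 statements merged into one kernel-verified Lean document; each statement's English description precedes it below -/
import Mathlib

section
/- The nuclear numerical range is not unitarily invariant: there exist 2×2 complex matrices A, Z and a unitary U such that W(A | U Z U†) ≠ W(A | Z). Concretely, for Z = [[0,2],[0,0]], U = (1/√2)[[1,1],[1,−1]], and A = [[a,b],[c,d]], one has W(A|Z) = {a} while W(A|UZU†) = {(a+b+c+d)/2}. -/
open Matrix

/-- Nuclear numerical range W(A|Z). -/
noncomputable def nuclearNR {n : ℕ} (A Z : Matrix (Fin n) (Fin n) ℂ) : Set ℂ :=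
  {z | ∃ ψ : Fin n → ℂ, star ψ ⬝ᵥ ψ = 1 ∧ star ψ ⬝ᵥ (Z *ᵥ ψ) = 0 ∧
    star ψ ⬝ᵥ (A *ᵥ ψ) = z}

/-- Standard numerical range W(A). -/
noncomputable def numRange {n : ℕ} (A : Matrix (Fin n) (Fin n) ℂ) : Set ℂ :=
  {z | ∃ ψ : Fin n → ℂ, star ψ ⬝ᵥ ψ = 1 ∧ star ψ ⬝ᵥ (A *ᵥ ψ) = z}

/-!
For `Z = !![0, c; 0, 0]` with `c ≠ 0` the constraint `⟨ψ, Zψ⟩ = c ψ̄₀ ψ₁ = 0` forces a unit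
vector `ψ` to be a basis vector up to phase, so `W(A|Z) = {A₀₀, A₁₁}`. Conjugating `Z = !![0, 2; 0, 0]`
by the normalised Hadamard matrix gives `!![1, -1; 1, -1]`, whose constraint
`(ψ̄₀ + ψ̄₁)(ψ₀ - ψ₁) = 0` admits `ψ = (1, 1)/√2`. For `A = diag(0, 1)` this puts `1/2` in
`W(A|UZU†)` but not in `W(A|Z) = {0, 1}`.
-/

lemma star_dotProduct_mulVec_fin_two (A : Matrix (Fin 2) (Fin 2) ℂ) (ψ : Fin 2 → ℂ) :
    star ψ ⬝ᵥ (A *ᵥ ψ) = star (ψ 0) * (A 0 0 * ψ 0 + A 0 1 * ψ 1) +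
      star (ψ 1) * (A 1 0 * ψ 0 + A 1 1 * ψ 1) := by
  simp [dotProduct, mulVec, Fin.sum_univ_two]

lemma nuclearNR_strictUpper {c : ℂ} (hc : c ≠ 0) (A : Matrix (Fin 2) (Fin 2) ℂ) :
    nuclearNR A !![0, c; 0, 0] = {A 0 0, A 1 1} := by
  ext z
  constructor
  · rintro ⟨ψ, hnorm, hZ, rfl⟩
    simp only [dotProduct, Fin.sum_univ_two, Pi.star_apply] at hnorm
    rw [star_dotProduct_mulVec_fin_two] at hZ ⊢
    simp only [of_apply, cons_val', cons_val_zero, cons_val_one, empty_val', cons_val_fin_one,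
      zero_mul, zero_add, add_zero, mul_zero, mul_left_comm _ c, mul_eq_zero, hc,
      false_or] at hZ
    rcases hZ with hψ₀ | hψ₁
    · right
      rw [star_eq_zero.mp hψ₀, star_zero] at hnorm ⊢
      rw [Set.mem_singleton_iff]
      linear_combination A 1 1 * hnorm
    · left
      rw [hψ₁, star_zero] at hnorm ⊢
      linear_combination A 0 0 * hnorm
  · rintro (rfl | rfl)
    · refine ⟨Pi.single 0 1, ?_, ?_, ?_⟩ <;> simp [dotProduct, mulVec, Fin.sum_univ_two]
    · refine ⟨Pi.single 1 1, ?_, ?_, ?_⟩ <;> simp [dotProduct, mulVec, Fin.sum_univ_two]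

section Hadamard

variable {s : ℝ}

lemma conjTranspose_mul_self_smul_hadamard (hs : (s : ℂ) * s = 1 / 2) :
    ((s : ℂ) • !![1, 1; 1, -1] : Matrix (Fin 2) (Fin 2) ℂ)ᴴ * ((s : ℂ) • !![1, 1; 1, -1]) =
      1 := by
  ext i j
  fin_cases i <;> fin_cases j <;>
    simp [Matrix.mul_apply, Fin.sum_univ_two, Complex.conj_ofReal] <;>
    linear_combination 2 * hs

lemma smul_hadamard_mul_strictUpper_mul_conjTranspose (hs : (s : ℂ) * s = 1 / 2) :
    ((s : ℂ) • !![1, 1; 1, -1] : Matrix (Fin 2) (Fin 2) ℂ) * !![0, 2; 0, 0] *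
      ((s : ℂ) • !![1, 1; 1, -1])ᴴ = !![1, -1; 1, -1] := by
  ext i j
  fin_cases i <;> fin_cases j <;>
    simp [Matrix.mul_apply, Fin.sum_univ_two, Complex.conj_ofReal] <;>
    linear_combination 2 * hs

lemma one_half_mem_nuclearNR_diag (hs : (s : ℂ) * s = 1 / 2) :
    1 / 2 ∈ nuclearNR !![(0 : ℂ), 0; 0, 1] !![1, -1; 1, -1] := by
  refine ⟨fun _ => s, ?_, ?_, ?_⟩ <;>
    simp only [dotProduct, mulVec, Fin.sum_univ_two, Pi.star_apply, Complex.star_def,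
      Complex.conj_ofReal]
  · linear_combination 2 * hs
  · simp
  · simp
    linear_combination hs

end Hadamard

lemma ofReal_one_div_sqrt_two_mul_self :
    ((1 / Real.sqrt 2 : ℝ) : ℂ) * ((1 / Real.sqrt 2 : ℝ) : ℂ) = 1 / 2 := by
  rw [← Complex.ofReal_mul, div_mul_div_comm, Real.mul_self_sqrt zero_le_two, one_mul]
  norm_num

/-- The nuclear numerical range is not unitarily invariant: with
`Z = !![0,2;0,0]` and `U = (1/√2)·!![1,1;1,-1]` there is a matrix `A` with
`W(A|UZU†) ≠ W(A|Z)`. -/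
theorem nuclearNR_not_unitarily_invariant :
    ∃ A : Matrix (Fin 2) (Fin 2) ℂ,
      ∀ Z U : Matrix (Fin 2) (Fin 2) ℂ,
        Z = !![0, 2; 0, 0] →
        U = ((1 / Real.sqrt 2 : ℝ) : ℂ) • !![1, 1; 1, -1] →
        Uᴴ * U = 1 ∧ nuclearNR A (U * Z * Uᴴ) ≠ nuclearNR A Z := by
  refine ⟨!![0, 0; 0, 1], fun Z U hZ hU => ?_⟩
  subst hZ hU
  have hs := ofReal_one_div_sqrt_two_mul_self
  refine ⟨conjTranspose_mul_self_smul_hadamard hs, fun h => ?_⟩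
  have hmem := one_half_mem_nuclearNR_diag hs
  rw [← smul_hadamard_mul_strictUpper_mul_conjTranspose hs, h,
    nuclearNR_strictUpper two_ne_zero] at hmem
  norm_num at hmem
end

section
/- For matrices A, B and ranks k₁, k₂, the intersection of higher-rank numerical ranges satisfies Λ_{k₁}(A) ∩ Λ_{k₂}(B) ⊆ Λ_{k₁+k₂}(A ⊕ B). -/
open Matrix

section aux

variable {R M M₂ M₃ M₄ : Type*} [Field R]
  [AddCommGroup M] [Module R M] [AddCommGroup M₂] [Module R M₂]
  [AddCommGroup M₃] [Module R M₃] [AddCommGroup M₄] [Module R M₄]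

lemma range_prodMap_aux (f : M →ₗ[R] M₃) (g : M₂ →ₗ[R] M₄) :
    LinearMap.range (f.prodMap g) =
      (LinearMap.range f).prod (LinearMap.range g) := by
  ext ⟨x, y⟩
  constructor
  · rintro ⟨⟨a, b⟩, h⟩
    simp only [LinearMap.prodMap_apply, Prod.mk.injEq] at h
    exact ⟨⟨a, h.1⟩, ⟨b, h.2⟩⟩
  · rintro ⟨⟨a, ha⟩, ⟨b, hb⟩⟩
    exact ⟨(a, b), by simp [ha, hb]⟩

lemma finrank_prod_submodule [FiniteDimensional R M] [FiniteDimensional R M₂]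
    (p : Submodule R M) (q : Submodule R M₂) :
    Module.finrank R (p.prod q) = Module.finrank R p + Module.finrank R q := by
  have hinj : Function.Injective (p.subtype.prodMap q.subtype) := by
    rintro ⟨⟨a, _⟩, ⟨b, _⟩⟩ ⟨⟨c, _⟩, ⟨d, _⟩⟩ h
    simp only [LinearMap.prodMap_apply, Submodule.coe_subtype, Prod.mk.injEq] at h
    simp [Prod.ext_iff, Subtype.ext_iff, h.1, h.2]
  have hrange : LinearMap.range (p.subtype.prodMap q.subtype) = p.prod q := by
    rw [range_prodMap_aux]
    simp [Submodule.range_subtype]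
  have e : (↥p × ↥q) ≃ₗ[R] ↥(p.prod q) :=
    (LinearEquiv.ofInjective _ hinj).trans (LinearEquiv.ofEq _ _ hrange)
  rw [← e.finrank_eq, Module.finrank_prod]

end aux

lemma rank_fromBlocks_diag {m n : Type*} [Fintype m] [DecidableEq m]
    [Fintype n] [DecidableEq n] (A : Matrix m m ℂ) (B : Matrix n n ℂ) :
    (Matrix.fromBlocks A 0 0 B).rank = A.rank + B.rank := by
  classical
  let e : ((m ⊕ n) → ℂ) ≃ₗ[ℂ] (m → ℂ) × (n → ℂ) :=
    LinearEquiv.sumArrowLequivProdArrow m n ℂ ℂ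
  have key : (Matrix.fromBlocks A 0 0 B).mulVecLin =
      (e.symm : ((m → ℂ) × (n → ℂ)) →ₗ[ℂ] ((m ⊕ n) → ℂ)) ∘ₗ
        (A.mulVecLin.prodMap B.mulVecLin) ∘ₗ (e : ((m ⊕ n) → ℂ) →ₗ[ℂ] _) := by
    ext x i
    rcases i with i | i <;>
      simp [e, Matrix.mulVecLin, Matrix.mulVec, Matrix.fromBlocks,
        LinearEquiv.sumArrowLequivProdArrow, dotProduct,
        Fintype.sum_sum_type, Sum.elim]
  have h1 : (Matrix.fromBlocks A 0 0 B).rank =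
      Module.finrank ℂ (LinearMap.range (A.mulVecLin.prodMap B.mulVecLin)) := by
    rw [Matrix.rank, key]
    rw [LinearMap.range_comp, LinearMap.range_comp, LinearEquiv.range,
      Submodule.map_top]
    exact (Submodule.equivMapOfInjective _ e.symm.injective _).symm.finrank_eq
  rw [h1, range_prodMap_aux, finrank_prod_submodule]
  rfl

/-- Rank-k numerical range Λ_k(T): compression values of T by rank-k
orthogonal projections. -/
noncomputable def rankkNR {m : Type*} [Fintype m] [DecidableEq m] (k : ℕ)
    (T : Matrix m m ℂ) : Set ℂ :=
  {lam | ∃ P : Matrix m m ℂ, Pᴴ = P ∧ P * P = P ∧ P.rank = k ∧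
    P * T * P = lam • P}

theorem rankkNR_inter_subset_directSum {m n : Type*}
    [Fintype m] [DecidableEq m] [Fintype n] [DecidableEq n]
    (A : Matrix m m ℂ) (B : Matrix n n ℂ) (k₁ k₂ : ℕ) :
    rankkNR k₁ A ∩ rankkNR k₂ B ⊆
      rankkNR (k₁ + k₂) (Matrix.fromBlocks A 0 0 B) := by
  rintro lam ⟨⟨P₁, hP₁h, hP₁i, hP₁r, hP₁c⟩, ⟨P₂, hP₂h, hP₂i, hP₂r, hP₂c⟩⟩
  refine ⟨Matrix.fromBlocks P₁ 0 0 P₂, ?_, ?_, ?_, ?_⟩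
  · simp [Matrix.fromBlocks_conjTranspose, hP₁h, hP₂h]
  · simp [Matrix.fromBlocks_multiply, hP₁i, hP₂i]
  · rw [rank_fromBlocks_diag, hP₁r, hP₂r]
  · simp [Matrix.fromBlocks_multiply, Matrix.fromBlocks_smul, hP₁c, hP₂c]
end

section
/- For the two-qubit amplitude-damping-type channel with Kraus blocks E₁₁ = diag(1, 1−p₂), F₁₁ = diag(1, 1−p₂(1−p₁)), E₁₂ = diag(0, √(p₂(1−p₂))), F₁₂ = [[0, √(p₂(1−p₁))],[0,0]] and parameters 0 < p₁ < 1, 0 < p₂ < 1, taking λ₁₁ = 1 − p₂(1−p₁)/(2 − p₁ − p₂ + p₁p₂), the unit vectors ψ_E = (cos(θ_E/2), e^{iφ_E} sin(θ_E/2))ᵀ and ψ_F = (cos(θ_F/2), sin(θ_F/2))ᵀ with cos θ_E = (p₁ − p₂ + p₁p₂)/(2 − p₁ − p₂ + p₁p₂) and cos θ_F = (−p₁ − p₂ + p₁p₂)/(2 − p₁ − p₂ + p₁p₂) satisfy, for every φ_E ∈ [0, 2π): ⟨ψ_E, E₁₁ψ_E⟩ = ⟨ψ_F, F₁₁ψ_F⟩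 = λ₁₁ and ⟨ψ_E, E₁₂ψ_E⟩ = ⟨ψ_F, F₁₂ψ_F⟩. -/
open Matrix Real

/-!
`ψ_E` and `ψ_F` are Bloch vectors `(cos (θ/2), e^{iφ} sin (θ/2))`. The expectation of a diagonal
operator in such a vector depends only on `cos θ`, and that of the off-diagonal operator `F₁₂`
only on `sin θ = √(1 - cos² θ)`. Since `θ_E, θ_F` are arccosines of numbers in `[-1, 1]`, all four
expectations become rational functions of `p₁, p₂` and one square root, and the Knill-Laflamme
equations reduce to identities between them.
-/

/-- Azimuthal angle θ_E for the amplitude-damping code. -/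
noncomputable def thetaE (p₁ p₂ : ℝ) : ℝ :=
  Real.arccos ((p₁ - p₂ + p₁ * p₂) / (2 - p₁ - p₂ + p₁ * p₂))

/-- Azimuthal angle θ_F for the amplitude-damping code. -/
noncomputable def thetaF (p₁ p₂ : ℝ) : ℝ :=
  Real.arccos ((-p₁ - p₂ + p₁ * p₂) / (2 - p₁ - p₂ + p₁ * p₂))

/-- The code vector ψ_E. -/
noncomputable def psiE (p₁ p₂ φE : ℝ) : Fin 2 → ℂ :=
  ![(Real.cos (thetaE p₁ p₂ / 2) : ℂ),
    Complex.exp (φE * Complex.I) * (Real.sin (thetaE p₁ p₂ / 2) : ℂ)]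

/-- The code vector ψ_F. -/
noncomputable def psiF (p₁ p₂ : ℝ) : Fin 2 → ℂ :=
  ![(Real.cos (thetaF p₁ p₂ / 2) : ℂ), (Real.sin (thetaF p₁ p₂ / 2) : ℂ)]

noncomputable def blochVector (θ φ : ℝ) : Fin 2 → ℂ :=
  ![(Real.cos (θ / 2) : ℂ), Complex.exp (φ * Complex.I) * (Real.sin (θ / 2) : ℂ)]

section BlochVector

variable (θ φ : ℝ)

lemma conj_exp_ofReal_mul_I_mul_self :
    starRingEnd ℂ (Complex.exp (φ * Complex.I)) * Complex.exp (φ * Complex.I) = 1 := by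
  rw [← Complex.exp_conj, ← Complex.exp_add, map_mul, Complex.conj_ofReal, Complex.conj_I]
  simp

lemma star_blochVector_dotProduct_diagonal_mulVec (α β : ℂ) :
    star (blochVector θ φ) ⬝ᵥ (!![α, 0; 0, β] *ᵥ blochVector θ φ) =
      α * ((1 + Real.cos θ) / 2 : ℝ) + β * ((1 - Real.cos θ) / 2 : ℝ) := by
  have hcos : Real.cos (θ / 2) ^ 2 = (1 + Real.cos θ) / 2 := by
    rw [Real.cos_sq, mul_div_cancel₀ θ two_ne_zero]; ring
  have hsin : Real.sin (θ / 2) ^ 2 = (1 - Real.cos θ) / 2 := by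
    rw [Real.sin_sq_eq_half_sub, mul_div_cancel₀ θ two_ne_zero]; ring
  rw [← hcos, ← hsin, Complex.ofReal_pow, Complex.ofReal_pow]
  simp only [blochVector, mulVec, dotProduct, Fin.sum_univ_two, Pi.star_apply, cons_val_zero,
    cons_val_one, RCLike.star_def, map_mul, Complex.conj_ofReal, of_apply, cons_val',
    empty_val', cons_val_fin_one]
  linear_combination β * (Real.sin (θ / 2) : ℂ) ^ 2 * conj_exp_ofReal_mul_I_mul_self φ

lemma star_blochVector_dotProduct_self : star (blochVector θ φ) ⬝ᵥ blochVector θ φ = 1 := by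
  have h := star_blochVector_dotProduct_diagonal_mulVec θ φ 1 1
  rw [← one_fin_two, one_mulVec] at h
  rw [h]
  push_cast
  ring

lemma star_blochVector_dotProduct_upper_mulVec (γ : ℂ) :
    star (blochVector θ φ) ⬝ᵥ (!![0, γ; 0, 0] *ᵥ blochVector θ φ) =
      γ * (Real.sin θ / 2 : ℝ) * Complex.exp (φ * Complex.I) := by
  have hsin : Real.sin θ / 2 = Real.cos (θ / 2) * Real.sin (θ / 2) := by
    have h := Real.sin_two_mul (θ / 2)
    rw [mul_div_cancel₀ θ two_ne_zero] at h
    linarith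
  rw [hsin, Complex.ofReal_mul]
  simp only [blochVector, mulVec, dotProduct, Fin.sum_univ_two, Pi.star_apply, cons_val_zero,
    cons_val_one, RCLike.star_def, map_mul, Complex.conj_ofReal, of_apply, cons_val',
    empty_val', cons_val_fin_one]
  ring

end BlochVector

lemma sqrt_mul_sqrt_of_common_factor {a b c : ℝ} (hb : 0 ≤ b) (hc : 0 ≤ c) :
    √(a * b) * √(b * c) = b * √(a * c) := by
  rw [← Real.sqrt_mul' _ (mul_nonneg hb hc), show a * b * (b * c) = b ^ 2 * (a * c) by ring,
    Real.sqrt_mul (sq_nonneg b), Real.sqrt_sq hb]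

section AmplitudeDamping

variable {p₁ p₂ : ℝ}

lemma psiE_eq_blochVector (φ : ℝ) : psiE p₁ p₂ φ = blochVector (thetaE p₁ p₂) φ := rfl

lemma psiF_eq_blochVector : psiF p₁ p₂ = blochVector (thetaF p₁ p₂) 0 := by
  simp [psiF, blochVector]

lemma damping_denom_pos (h₁' : p₁ ≤ 1) (h₂' : p₂ ≤ 1) : 0 < 2 - p₁ - p₂ + p₁ * p₂ := by
  nlinarith [mul_nonneg (sub_nonneg.2 h₁') (sub_nonneg.2 h₂')]

lemma cos_thetaE (h₁ : 0 ≤ p₁) (h₁' : p₁ ≤ 1) (h₂' : p₂ ≤ 1) :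
    Real.cos (thetaE p₁ p₂) = (p₁ - p₂ + p₁ * p₂) / (2 - p₁ - p₂ + p₁ * p₂) := by
  have hD := damping_denom_pos h₁' h₂'
  refine Real.cos_arccos ?_ ?_
  · rw [le_div_iff₀ hD]
    nlinarith [mul_nonneg (sub_nonneg.2 h₁') (sub_nonneg.2 h₂')]
  · rw [div_le_one hD]
    linarith

lemma cos_thetaF (h₁' : p₁ ≤ 1) (h₂' : p₂ ≤ 1) :
    Real.cos (thetaF p₁ p₂) = (-p₁ - p₂ + p₁ * p₂) / (2 - p₁ - p₂ + p₁ * p₂) := by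
  have hD := damping_denom_pos h₁' h₂'
  refine Real.cos_arccos ?_ ?_
  · rw [le_div_iff₀ hD]
    nlinarith [mul_nonneg (sub_nonneg.2 h₁') (sub_nonneg.2 h₂')]
  · rw [div_le_one hD]
    linarith

lemma sin_thetaF (h₁' : p₁ ≤ 1) (h₂' : p₂ ≤ 1) :
    Real.sin (thetaF p₁ p₂) = 2 * √((1 - p₁) * (1 - p₂)) / (2 - p₁ - p₂ + p₁ * p₂) := by
  have hD := damping_denom_pos h₁' h₂'
  have hsq : 1 - ((-p₁ - p₂ + p₁ * p₂) / (2 - p₁ - p₂ + p₁ * p₂)) ^ 2 =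
      (2 / (2 - p₁ - p₂ + p₁ * p₂)) ^ 2 * ((1 - p₁) * (1 - p₂)) := by
    field_simp
    ring
  rw [thetaF, Real.sin_arccos, hsq, Real.sqrt_mul (sq_nonneg _), Real.sqrt_sq (by positivity)]
  ring

end AmplitudeDamping

theorem amplitude_damping_code_general
    (p₁ p₂ : ℝ) (h₁ : 0 < p₁) (h₁' : p₁ < 1) (h₂' : p₂ < 1)
    (E₁₁ F₁₁ E₁₂ F₁₂ : Matrix (Fin 2) (Fin 2) ℂ)
    (hE11 : E₁₁ = !![1, 0; 0, ((1 - p₂ : ℝ) : ℂ)])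
    (hF11 : F₁₁ = !![1, 0; 0, ((1 - p₂ * (1 - p₁) : ℝ) : ℂ)])
    (hE12 : E₁₂ = !![0, 0; 0, ((Real.sqrt (p₂ * (1 - p₂)) : ℝ) : ℂ)])
    (hF12 : F₁₂ = !![0, ((Real.sqrt (p₂ * (1 - p₁)) : ℝ) : ℂ); 0, 0])
    (lam : ℝ) (hlam : lam = 1 - p₂ * (1 - p₁) / (2 - p₁ - p₂ + p₁ * p₂)) :
    ∀ φE : ℝ, 0 ≤ φE → φE < 2 * π →
      star (psiE p₁ p₂ φE) ⬝ᵥ psiE p₁ p₂ φE = 1 ∧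
      star (psiF p₁ p₂) ⬝ᵥ psiF p₁ p₂ = 1 ∧
      star (psiE p₁ p₂ φE) ⬝ᵥ (E₁₁ *ᵥ psiE p₁ p₂ φE) = (lam : ℂ) ∧
      star (psiF p₁ p₂) ⬝ᵥ (F₁₁ *ᵥ psiF p₁ p₂) = (lam : ℂ) ∧
      star (psiE p₁ p₂ φE) ⬝ᵥ (E₁₂ *ᵥ psiE p₁ p₂ φE) =
        star (psiF p₁ p₂) ⬝ᵥ (F₁₂ *ᵥ psiF p₁ p₂) := by
  intro φE _ _
  subst hE11 hF11 hE12 hF12 hlam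
  have hD := damping_denom_pos h₁'.le h₂'.le
  rw [psiE_eq_blochVector, psiF_eq_blochVector, star_blochVector_dotProduct_self,
    star_blochVector_dotProduct_self, star_blochVector_dotProduct_diagonal_mulVec,
    star_blochVector_dotProduct_diagonal_mulVec, star_blochVector_dotProduct_diagonal_mulVec,
    star_blochVector_dotProduct_upper_mulVec, cos_thetaE h₁.le h₁'.le h₂'.le,
    cos_thetaF h₁'.le h₂'.le, sin_thetaF h₁'.le h₂'.le]
  refine ⟨rfl, rfl, ?_, ?_, ?_⟩
  · norm_cast
    field_simp
    ring
  · norm_cast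
    field_simp
    ring
  · have hsinE : (1 - (p₁ - p₂ + p₁ * p₂) / (2 - p₁ - p₂ + p₁ * p₂)) / 2 =
        (1 - p₁) / (2 - p₁ - p₂ + p₁ * p₂) := by
      field_simp
      ring
    simp only [Complex.ofReal_zero, zero_mul, zero_add, Complex.exp_zero, mul_one]
    norm_cast
    rw [hsinE]
    linear_combination (-1 / (2 - p₁ - p₂ + p₁ * p₂)) *
      sqrt_mul_sqrt_of_common_factor (a := p₂) (sub_nonneg.2 h₁'.le) (sub_nonneg.2 h₂'.le)

theorem amplitude_damping_code
    (p₁ p₂ : ℝ) (h₁ : 0 < p₁) (h₁' : p₁ < 1) (h₂ : 0 < p₂) (h₂' : p₂ < 1)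
    (E₁₁ F₁₁ E₁₂ F₁₂ : Matrix (Fin 2) (Fin 2) ℂ)
    (hE11 : E₁₁ = !![1, 0; 0, ((1 - p₂ : ℝ) : ℂ)])
    (hF11 : F₁₁ = !![1, 0; 0, ((1 - p₂ * (1 - p₁) : ℝ) : ℂ)])
    (hE12 : E₁₂ = !![0, 0; 0, ((Real.sqrt (p₂ * (1 - p₂)) : ℝ) : ℂ)])
    (hF12 : F₁₂ = !![0, ((Real.sqrt (p₂ * (1 - p₁)) : ℝ) : ℂ); 0, 0])
    (lam : ℝ) (hlam : lam = 1 - p₂ * (1 - p₁) / (2 - p₁ - p₂ + p₁ * p₂)) :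
    ∀ φE : ℝ, 0 ≤ φE → φE < 2 * π →
      star (psiE p₁ p₂ φE) ⬝ᵥ psiE p₁ p₂ φE = 1 ∧
      star (psiF p₁ p₂) ⬝ᵥ psiF p₁ p₂ = 1 ∧
      star (psiE p₁ p₂ φE) ⬝ᵥ (E₁₁ *ᵥ psiE p₁ p₂ φE) = (lam : ℂ) ∧
      star (psiF p₁ p₂) ⬝ᵥ (F₁₁ *ᵥ psiF p₁ p₂) = (lam : ℂ) ∧
      star (psiE p₁ p₂ φE) ⬝ᵥ (E₁₂ *ᵥ psiE p₁ p₂ φE) =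
        star (psiF p₁ p₂) ⬝ᵥ (F₁₂ *ᵥ psiF p₁ p₂) :=
  amplitude_damping_code_general p₁ p₂ h₁ h₁' h₂' E₁₁ F₁₁ E₁₂ F₁₂ hE11 hF11 hE12 hF12 lam hlam
end
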